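/- Monotonicity of star networks: let C₁, C'₁, C₂ be star-configurations of a 1-phase-bounded broadcast protocol with C₁ → C'₁ and C₁ ⪯ C₂. Then there exists a star-configuration C'₂ with C'₁ ⪯ C'₂ and C₂ →* C'₂. -/

import Mathlib

namespace BN

/-- Actions of a broadcast protocol: broadcast `!!m`, reception `?m`, internal `τ`. -/
inductive Act (M : Type) : Type where
  | brd : M → Act M
  | rcv : M → Act M
  | tau : Act M

/-- A broadcast protocol: an initial state and a set of transitions. -/
structure Protocol (Q M : Type) : Type where
  qin : Q
  delta : Set (Q × Act M × Q)

variable {Q M V : Type}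

/-- `q` has an outgoing reception of `m`. -/
def canRecv (P : Protocol Q M) (q : Q) (m : M) : Prop :=
  ∃ q', (q, Act.rcv m, q') ∈ P.delta

/-- One step of the broadcast network semantics over topology `G`,
performed by vertex `v` taking transition `t`. -/
def Step (G : SimpleGraph V) (P : Protocol Q M) (v : V)
    (t : Q × Act M × Q) (L L' : V → Q) : Prop :=
  t ∈ P.delta ∧ L v = t.1 ∧ L' v = t.2.2 ∧
  (match t.2.1 with
   | Act.tau => ∀ u, u ≠ v → L' u = L u
   | Act.brd m =>
       (∀ u, G.Adj v u →
          ((L u, Act.rcv m, L' u) ∈ P.delta ∨ (¬ canRecv P (L u) m ∧ L' u = L u))) ∧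
       (∀ u, u ≠ v → ¬ G.Adj v u → L' u = L u)
   | Act.rcv _ => False)

def StepAny (G : SimpleGraph V) (P : Protocol Q M) (L L' : V → Q) : Prop :=
  ∃ v t, Step G P v t L L'

def Reach (G : SimpleGraph V) (P : Protocol Q M) : (V → Q) → (V → Q) → Prop :=
  Relation.ReflTransGen (StepAny G P)

def initConf (P : Protocol Q M) : V → Q := fun _ => P.qin

/-- `qf` is coverable over the class of all (finite) graph topologies. -/
def Coverable (P : Protocol Q M) (qf : Q) : Prop :=
  ∃ (V' : Type) (_ : Fintype V') (G : SimpleGraph V') (L : V' → Q),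
    Reach G P (initConf P) L ∧ ∃ v, L v = qf

/-- A tree topology: a prefix-closed finite set of words over ℕ containing ε. -/
structure TreeTopo : Type where
  verts : Finset (List ℕ)
  nil_mem : ([] : List ℕ) ∈ verts
  prefixClosed : ∀ w ∈ verts, ∀ w' : List ℕ, w' <+: w → w' ∈ verts

abbrev TreeTopo.Vert (T : TreeTopo) : Type := {w : List ℕ // w ∈ T.verts}

def TreeTopo.root (T : TreeTopo) : T.Vert := ⟨[], T.nil_mem⟩

/-- The graph of a tree topology: each word `w ++ [x]` is adjacent to its parent `w`. -/
def TreeTopo.graph (T : TreeTopo) : SimpleGraph T.Vert where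
  Adj u v := (∃ x : ℕ, (v : List ℕ) = (u : List ℕ) ++ [x]) ∨
             (∃ x : ℕ, (u : List ℕ) = (v : List ℕ) ++ [x])
  symm := by constructor; intro u v h; exact h.symm
  loopless := by
    constructor
    intro u h
    rcases h with ⟨x, hx⟩ | ⟨x, hx⟩ <;> simpa using congrArg List.length hx

def CoverableWith (T : TreeTopo) (P : Protocol Q M) (qf : Q) : Prop :=
  ∃ L : T.Vert → Q, Reach T.graph P (initConf P) L ∧ ∃ u, L u = qf

def CoverableTreeRoot (P : Protocol Q M) (qf : Q) : Prop :=
  ∃ (T : TreeTopo) (L : T.Vert → Q),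
    Reach T.graph P (initConf P) L ∧ L T.root = qf

/-- `(T, lam)` is the unfolding of graph `G` at vertex `v` to depth `n`. -/
structure IsUnfolding {V : Type} (G : SimpleGraph V) (v : V) (n : ℕ)
    (T : TreeTopo) (lam : T.Vert → V) : Prop where
  root_lbl : lam T.root = v
  depth_le : ∀ w ∈ T.verts, w.length ≤ n
  root_children :
    Set.BijOn lam {u : T.Vert | ∃ x : ℕ, (u : List ℕ) = [x]} (G.neighborSet v)
  children : ∀ (u : T.Vert) (w : List ℕ) (hw : w ∈ T.verts) (x : ℕ),
      (u : List ℕ) = w ++ [x] → (u : List ℕ).length < n →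
      Set.BijOn lam {u' : T.Vert | ∃ y : ℕ, (u' : List ℕ) = (u : List ℕ) ++ [y]}
        (G.neighborSet (lam u) \ {lam ⟨w, hw⟩})
  no_deep : ∀ u : T.Vert, n ≤ (u : List ℕ).length →
      ∀ x : ℕ, (u : List ℕ) ++ [x] ∉ T.verts

/-- Phase tags annotating states: `zero` (phase 0), broadcast phase `j`, reception phase `j`. -/
inductive PTag : Type where
  | zero : PTag
  | bph : ℕ → PTag
  | rph : ℕ → PTag
deriving DecidableEq

def bOf : ℕ → PTag
  | 0 => .zero
  | j+1 => .bph (j+1)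

def rOf : ℕ → PTag
  | 0 => .zero
  | j+1 => .rph (j+1)

/-- `φ` witnesses that `P` is `k`-phase-bounded. -/
def IsPhaseAssignment (k : ℕ) (P : Protocol Q M) (φ : Q → PTag) : Prop :=
  φ P.qin = .zero ∧
  (∀ q : Q, φ q = .zero ∨ ∃ j, 1 ≤ j ∧ j ≤ k ∧ (φ q = .bph j ∨ φ q = .rph j)) ∧
  ∀ t ∈ P.delta,
    (match t.2.1 with
     | Act.tau => φ t.1 = φ t.2.2
     | Act.brd _ =>
         (∃ j, 1 ≤ j ∧ j ≤ k ∧ φ t.1 = .bph j ∧ φ t.2.2 = .bph j) ∨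
         (∃ i, i < k ∧ φ t.1 = rOf i ∧ φ t.2.2 = .bph (i+1))
     | Act.rcv _ =>
         (∃ j, 1 ≤ j ∧ j ≤ k ∧ φ t.1 = .rph j ∧ φ t.2.2 = .rph j) ∨
         (∃ i, i < k ∧ φ t.1 = bOf i ∧ φ t.2.2 = .rph (i+1)) ∨
         (1 ≤ k ∧ φ t.1 = .bph k ∧ φ t.2.2 = .rph k))

def IsPhaseBounded (k : ℕ) (P : Protocol Q M) : Prop :=
  ∃ φ : Q → PTag, IsPhaseAssignment k P φ

/-- The `k`-unfolding `Pₖ` of a protocol `P`. -/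
def unfoldP (P : Protocol Q M) (k : ℕ) : Protocol (Q × PTag) M where
  qin := (P.qin, .zero)
  delta :=
    {t | ∃ q p, (q, Act.tau, p) ∈ P.delta ∧ t = ((q, .zero), Act.tau, (p, .zero))} ∪
    {t | ∃ q p α j, 1 ≤ j ∧ j ≤ k ∧ (q, α, p) ∈ P.delta ∧
        (α = Act.tau ∨ ∃ m, α = Act.rcv m) ∧ t = ((q, .rph j), α, (p, .rph j))} ∪
    {t | ∃ q p α j, 1 ≤ j ∧ j ≤ k ∧ (q, α, p) ∈ P.delta ∧
        (α = Act.tau ∨ ∃ m, α = Act.brd m) ∧ t = ((q, .bph j), α, (p, .bph j))} ∪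
    {t | ∃ q p m j, j < k ∧ (q, Act.brd m, p) ∈ P.delta ∧
        t = ((q, rOf j), Act.brd m, (p, .bph (j+1)))} ∪
    {t | ∃ q p m j, j < k ∧ (q, Act.rcv m, p) ∈ P.delta ∧
        t = ((q, bOf j), Act.rcv m, (p, .rph (j+1)))} ∪
    {t | ∃ q p m, 1 ≤ k ∧ (q, Act.rcv m, p) ∈ P.delta ∧
        t = ((q, .bph k), Act.rcv m, (p, .rph k))}

/-- Star topology: root `none` adjacent to every leaf `some i`, no other edges. -/
def starGraph (ι : Type) : SimpleGraph (Option ι) where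
  Adj u v := (u = none ∧ v ≠ none) ∨ (v = none ∧ u ≠ none)
  symm := by constructor; intro u v h; tauto
  loopless := by constructor; intro u h; tauto

/-- For a 1-phase-bounded protocol with witness `φ`, `Q^b = Q₀ ∪ Q₁^b`. -/
def Qb (φ : Q → PTag) : Set Q := {q | φ q = .zero ∨ φ q = .bph 1}

/-- The set component of the broadcast-print of a star configuration. -/
def bprintSet {ι : Type} (φ : Q → PTag) (L : Option ι → Q) : Set Q :=
  {q | q ∈ Qb φ ∧ ∃ i, L (some i) = q}

/-- The abstract transition relation `⇒` on broadcast-prints. -/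
def PrintStep (P : Protocol Q M) (φ : Q → PTag) :
    (Q × Set Q) → (Q × Set Q) → Prop := fun pr pr' =>
  ∃ (ι : Type) (_ : Fintype ι) (L L' : Option ι → Q),
    StepAny (starGraph ι) P L L' ∧ L none ∈ Qb φ ∧ L' none ∈ Qb φ ∧
    pr = (L none, bprintSet φ L) ∧ pr' = (L' none, bprintSet φ L')

/-- Line topology on `Fin ℓ`: consecutive vertices are adjacent. -/
def lineGraph (ℓ : ℕ) : SimpleGraph (Fin ℓ) where
  Adj i j := (i : ℕ) + 1 = (j : ℕ) ∨ (j : ℕ) + 1 = (i : ℕ)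
  symm := by constructor; intro i j h; tauto
  loopless := by constructor; intro i h; rcases h with h | h <;> omega

/-- `t` is a broadcast transition. -/
def IsBrdT (t : Q × Act M × Q) : Prop := ∃ m, t.2.1 = Act.brd m

/-- In the execution described by `vs, ts` of length `n`, `i` is the first index at
which vertex `u` performs a broadcast. -/
def IsFirstBrd {V' : Type} (vs : ℕ → V') (ts : ℕ → Q × Act M × Q) (n : ℕ)
    (u : V') (i : ℕ) : Prop :=
  i < n ∧ vs i = u ∧ IsBrdT (ts i) ∧ ∀ j < i, vs j = u → ¬ IsBrdT (ts j)

/-- Every transition of `u` occurs no later than every broadcast of `w`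
(i.e. lastBroadcast(u) ≤ firstBroadcast(w)). -/
def BrdOrder {V' : Type} (n : ℕ) (vs : ℕ → V') (ts : ℕ → Q × Act M × Q)
    (u w : V') : Prop :=
  ∀ j j', j < n → j' < n → vs j = u → vs j' = w → IsBrdT (ts j') → j ≤ j'

/-- One application of the pair-coverability operator. -/
def pairStep (P : Protocol Q M) (S : Set (Q × Q)) : Set (Q × Q) :=
  S ∪
  {p | ∃ p₁, (p₁, p.2) ∈ S ∧ (p₁, Act.tau, p.1) ∈ P.delta} ∪
  {p | ∃ p₂, (p.1, p₂) ∈ S ∧ (p₂, Act.tau, p.2) ∈ P.delta} ∪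
  {p | ∃ p₁ p₂ m, (p₁, p₂) ∈ S ∧ (p₂, Act.brd m, p.2) ∈ P.delta ∧
      (p₁, Act.rcv m, p.1) ∈ P.delta} ∪
  {p | ∃ p₂ m, (p.1, p₂) ∈ S ∧ (p₂, Act.brd m, p.2) ∈ P.delta ∧ ¬ canRecv P p.1 m} ∪
  {p | p.1 = P.qin ∧ ∃ q', (p.2, q') ∈ S}

/-- The iteration `S₀ ⊆ S₁ ⊆ …` of the pair-coverability operator. -/
def Siter (P : Protocol Q M) : ℕ → Set (Q × Q)
  | 0 => {(P.qin, P.qin)}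
  | i+1 => pairStep P (Siter P i)


/-- `C₁ ⪯ C₂` for star configurations: equal root states, and for each state
`q ∈ Q⁰ ∪ Q₁ᵇ` the number of non-root vertices in `q` does not decrease. -/
def StarLe {Q ι₁ ι₂ : Type} (φ : Q → PTag)
    (L₁ : Option ι₁ → Q) (L₂ : Option ι₂ → Q) : Prop :=
  L₁ none = L₂ none ∧
  ∀ q ∈ Qb φ,
    Set.ncard {i : ι₁ | L₁ (some i) = q} ≤ Set.ncard {i : ι₂ | L₂ (some i) = q}

/-!
A single step of `C₁` is replayed by at most one step of `C₂`. A step of the root is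
replayed by the root of `C₂`, which is in the same state; on a broadcast, each leaf of `C₂`
receives if it can. A leaf step from a state of `Q⁰ ∪ Q₁ᵇ` is replayed by a leaf of `C₂` in the
same state, which exists because `C₂` has at least as many such leaves. A leaf step from any
other state is a `τ`-step, which keeps the leaf outside `Q⁰ ∪ Q₁ᵇ`, so `C₂` need not move.
The counts survive because, in a 1-phase-bounded protocol, receptions always lead to phase
`Q₁ʳ`: a leaf that is in `Q⁰ ∪ Q₁ᵇ` after a root broadcast is one that could not receive.
-/

open Function

section Counting

variable {ι κ Q : Type} [Finite ι] [Finite κ] [DecidableEq ι] [DecidableEq κ]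

lemma ncard_setOf_eq_eq_add_ite [DecidableEq Q] (f : ι → Q) (i : ι) (q : Q) :
    {l | f l = q}.ncard = {l | l ≠ i ∧ f l = q}.ncard + if f i = q then 1 else 0 := by
  split_ifs with hi
  · rw [← Set.ncard_insert_of_notMem (a := i) (by simp)]
    congr 1
    ext l
    by_cases hl : l = i <;> simp [hl, hi]
  · congr 1
    ext l
    by_cases hl : l = i <;> simp [hl, hi]

lemma ncard_setOf_update_add_ite [DecidableEq Q] (f : ι → Q) (i : ι) (b q : Q) :
    {l | update f i b l = q}.ncard + (if f i = q then 1 else 0) =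
      {l | f l = q}.ncard + if b = q then 1 else 0 := by
  have hoff : {l | l ≠ i ∧ update f i b l = q} = {l | l ≠ i ∧ f l = q} := by
    ext l
    by_cases hl : l = i <;> simp [hl]
  rw [ncard_setOf_eq_eq_add_ite (update f i b) i, ncard_setOf_eq_eq_add_ite f i, hoff,
    update_self]
  omega

lemma ncard_setOf_update_le_ncard_setOf_update {f : ι → Q} {g : κ → Q} {i : ι} {j : κ}
    (hfg : f i = g j) (b q : Q) (h : {l | f l = q}.ncard ≤ {l | g l = q}.ncard) :
    {l | update f i b l = q}.ncard ≤ {l | update g j b l = q}.ncard := by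
  classical
  have hf := ncard_setOf_update_add_ite f i b q
  have hg := ncard_setOf_update_add_ite g j b q
  rw [hfg] at hf
  split_ifs at hf hg <;> omega

lemma ncard_setOf_update_of_ne {f : ι → Q} {i : ι} {b q : Q} (hi : f i ≠ q) (hb : b ≠ q) :
    {l | update f i b l = q}.ncard = {l | f l = q}.ncard := by
  classical
  simpa [hi, hb] using ncard_setOf_update_add_ite f i b q

end Counting

section PhaseOne

variable {Q M : Type} {P : Protocol Q M} {φ : Q → PTag}

lemma IsPhaseAssignment.rcv_target_notMem_Qb (hφ : IsPhaseAssignment 1 P φ) {q q' : Q}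
    {m : M} (h : (q, Act.rcv m, q') ∈ P.delta) : q' ∉ Qb φ := by
  have hphase : φ q' = .rph 1 := by
    rcases hφ.2.2 _ h with ⟨j, hj1, hj2, -, hq'⟩ | ⟨i, hi, -, hq'⟩ | ⟨-, -, hq'⟩
    · rwa [le_antisymm hj2 hj1] at hq'
    · rwa [Nat.lt_one_iff.mp hi] at hq'
    · exact hq'
  simp [Qb, hphase]

lemma IsPhaseAssignment.brd_source_mem_Qb (hφ : IsPhaseAssignment 1 P φ) {q q' : Q}
    {m : M} (h : (q, Act.brd m, q') ∈ P.delta) : q ∈ Qb φ := by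
  rcases hφ.2.2 _ h with ⟨j, hj1, hj2, hq, -⟩ | ⟨i, hi, hq, -⟩
  · right
    rwa [le_antisymm hj2 hj1] at hq
  · left
    rwa [Nat.lt_one_iff.mp hi] at hq

lemma IsPhaseAssignment.tau_mem_Qb_iff (hφ : IsPhaseAssignment 1 P φ) {q q' : Q}
    (h : (q, Act.tau, q') ∈ P.delta) : q ∈ Qb φ ↔ q' ∈ Qb φ := by
  have hphase : φ q = φ q' := hφ.2.2 _ h
  simp [Qb, hphase]

end PhaseOne

section Star

variable {Q M ι κ : Type} {P : Protocol Q M}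

lemma Step.apply_some_of_leaf [DecidableEq ι] {i : ι} {t : Q × Act M × Q}
    {L L' : Option ι → Q} (h : Step (starGraph ι) P (some i) t L L') (l : ι) :
    L' (some l) = update (fun k => L (some k)) i t.2.2 l := by
  obtain ⟨-, -, htgt, hrest⟩ := h
  by_cases hl : l = i
  · subst hl
    simpa using htgt
  rw [update_of_ne hl]
  obtain ⟨q, α, q'⟩ := t
  cases α with
  | tau => exact hrest (some l) (by simpa using hl)
  | brd m => exact hrest.2 (some l) (by simpa using hl) (by simp [starGraph])
  | rcv m => exact hrest.elim

lemma Step.apply_none_of_leaf_tau {i : ι} {q q' : Q} {L L' : Option ι → Q}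
    (h : Step (starGraph ι) P (some i) (q, Act.tau, q') L L') : L' none = L none :=
  h.2.2.2 none (by simp)

lemma Step.leaf_transfer [DecidableEq κ] {i : ι} {j : κ} {t : Q × Act M × Q}
    {L₁ L₁' : Option ι → Q} {L₂ : Option κ → Q} (h : Step (starGraph ι) P (some i) t L₁ L₁')
    (hroot : L₂ none = L₁ none) (hj : L₂ (some j) = t.1) :
    Step (starGraph κ) P (some j) t L₂ (update (update L₂ (some j) t.2.2) none (L₁' none)) := by
  obtain ⟨ht, -, -, hrest⟩ := h
  refine ⟨ht, hj, by simp, ?_⟩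
  obtain ⟨q, α, q'⟩ := t
  cases α with
  | tau =>
    rintro (_ | l) hl
    · simpa [hroot] using hrest none (by simp)
    · simp [update_of_ne hl]
  | brd m =>
    refine ⟨?_, ?_⟩
    · rintro (_ | l) hadj
      · simpa [hroot] using hrest.1 none (by simp [starGraph])
      · simp [starGraph] at hadj
    · rintro (_ | l) hl hadj
      · simp [starGraph] at hadj
      · simp [update_of_ne hl]
  | rcv m => exact hrest.elim

lemma step_none_tau_update [DecidableEq ι] {q q' : Q} {L : Option ι → Q} (ht : (q, Act.tau, q') ∈ P.delta)
    (hq : L none = q) : Step (starGraph ι) P none (q, Act.tau, q') L (update L none q') :=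
  ⟨ht, hq, by simp, fun u hu => update_of_ne hu _ _⟩

open Classical in
noncomputable def receiveOrStay (P : Protocol Q M) (m : M) (q : Q) : Q :=
  if h : canRecv P q m then h.choose else q

lemma receiveOrStay_spec (m : M) (q : Q) :
    (q, Act.rcv m, receiveOrStay P m q) ∈ P.delta ∨
      (¬ canRecv P q m ∧ receiveOrStay P m q = q) := by
  unfold receiveOrStay
  split_ifs with h
  · exact Or.inl h.choose_spec
  · exact Or.inr ⟨h, rfl⟩

lemma receiveOrStay_of_not_canRecv {m : M} {q : Q} (h : ¬ canRecv P q m) :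
    receiveOrStay P m q = q := by
  simp [receiveOrStay, h]

lemma step_none_brd_receiveOrStay {q q' : Q} {m : M} {L : Option ι → Q}
    (ht : (q, Act.brd m, q') ∈ P.delta) (hq : L none = q) :
    Step (starGraph ι) P none (q, Act.brd m, q') L
      (fun u => u.elim q' fun l => receiveOrStay P m (L (some l))) := by
  refine ⟨ht, hq, rfl, ?_, ?_⟩
  · rintro (_ | l) hadj
    · exact absurd hadj (SimpleGraph.irrefl _)
    · exact receiveOrStay_spec m _
  · rintro (_ | l) hne hadj
    · exact absurd rfl hne
    · exact absurd (Or.inl ⟨rfl, by simp⟩) hadj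

lemma Step.leaf_of_none_brd_of_mem_Qb {φ : Q → PTag} (hφ : IsPhaseAssignment 1 P φ)
    {q q' q'' : Q} {m : M} {L L' : Option ι → Q}
    (h : Step (starGraph ι) P none (q, Act.brd m, q') L L') {l : ι} (hl : L' (some l) = q'')
    (hq'' : q'' ∈ Qb φ) : L (some l) = q'' ∧ ¬ canRecv P q'' m := by
  rcases h.2.2.2.1 (some l) (by simp [starGraph]) with hrcv | ⟨hno, hstay⟩
  · exact absurd hq'' (hl ▸ hφ.rcv_target_notMem_Qb hrcv)
  · rw [← hl, hstay]
    exact ⟨rfl, hno⟩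

end Star

section Simulation

variable {Q M ι₁ ι₂ : Type} {P : Protocol Q M} {φ : Q → PTag}
  {C₁ C'₁ : Option ι₁ → Q} {C₂ : Option ι₂ → Q}

lemma StarLe.exists_leaf_eq [Finite ι₁] [Finite ι₂] (hle : StarLe φ C₁ C₂) {i : ι₁} (hi : C₁ (some i) ∈ Qb φ) :
    ∃ j, C₂ (some j) = C₁ (some i) := by
  have hself : 0 < {k : ι₁ | C₁ (some k) = C₁ (some i)}.ncard :=
    (Set.ncard_pos (Set.toFinite _)).2 ⟨i, rfl⟩
  have hpos : 0 < {j : ι₂ | C₂ (some j) = C₁ (some i)}.ncard := hself.trans_le (hle.2 _ hi)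
  exact (Set.ncard_pos (Set.toFinite _)).1 hpos

lemma StarLe.exists_step_of_leaf_step [Finite ι₁] [Finite ι₂] (hle : StarLe φ C₁ C₂) {i : ι₁} {t : Q × Act M × Q}
    (h : Step (starGraph ι₁) P (some i) t C₁ C'₁) (hq : t.1 ∈ Qb φ) :
    ∃ C'₂, StarLe φ C'₁ C'₂ ∧ StepAny (starGraph ι₂) P C₂ C'₂ := by
  classical
  obtain ⟨j, hj⟩ := hle.exists_leaf_eq (h.2.1 ▸ hq)
  have h₂ := h.leaf_transfer hle.1.symm (hj.trans h.2.1)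
  refine ⟨_, ⟨by simp, fun q _ => ?_⟩, _, _, h₂⟩
  simp only [h.apply_some_of_leaf, h₂.apply_some_of_leaf]
  exact ncard_setOf_update_le_ncard_setOf_update (f := fun k => C₁ (some k))
    (g := fun k => C₂ (some k)) hj.symm _ q (hle.2 q ‹_›)

lemma StarLe.of_leaf_tau_notMem_Qb [Finite ι₁] (hφ : IsPhaseAssignment 1 P φ) (hle : StarLe φ C₁ C₂)
    {i : ι₁} {q q' : Q} (h : Step (starGraph ι₁) P (some i) (q, Act.tau, q') C₁ C'₁)
    (hq : q ∉ Qb φ) : StarLe φ C'₁ C₂ := by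
  classical
  have hq' : q' ∉ Qb φ := (hφ.tau_mem_Qb_iff h.1).not.mp hq
  refine ⟨h.apply_none_of_leaf_tau.trans hle.1, fun q'' hq'' => ?_⟩
  simp only [h.apply_some_of_leaf]
  rw [ncard_setOf_update_of_ne (by rw [h.2.1]; rintro rfl; exact hq hq'')
    (by rintro rfl; exact hq' hq'')]
  exact hle.2 q'' hq''

lemma StarLe.exists_step_of_none_tau (hle : StarLe φ C₁ C₂) {q q' : Q}
    (h : Step (starGraph ι₁) P none (q, Act.tau, q') C₁ C'₁) :
    ∃ C'₂, StarLe φ C'₁ C'₂ ∧ StepAny (starGraph ι₂) P C₂ C'₂ := by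
  classical
  have hleaf (l : ι₁) : C'₁ (some l) = C₁ (some l) := h.2.2.2 (some l) (by simp)
  refine ⟨update C₂ none q', ⟨by simpa using h.2.2.1, fun q'' hq'' => ?_⟩, none, _,
    step_none_tau_update h.1 (hle.1.symm.trans h.2.1)⟩
  simpa [hleaf] using hle.2 q'' hq''

lemma StarLe.exists_step_of_none_brd [Finite ι₁] [Finite ι₂] (hφ : IsPhaseAssignment 1 P φ) (hle : StarLe φ C₁ C₂)
    {q q' : Q} {m : M} (h : Step (starGraph ι₁) P none (q, Act.brd m, q') C₁ C'₁) :
    ∃ C'₂, StarLe φ C'₁ C'₂ ∧ StepAny (starGraph ι₂) P C₂ C'₂ := by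
  refine ⟨_, ⟨h.2.2.1, fun q'' hq'' => ?_⟩, none, _,
    step_none_brd_receiveOrStay h.1 (hle.1.symm.trans h.2.1)⟩
  have hsub₁ : {l | C'₁ (some l) = q''} ⊆ {l | C₁ (some l) = q'' ∧ ¬ canRecv P q'' m} :=
    fun l hl => h.leaf_of_none_brd_of_mem_Qb hφ hl hq''
  have hsub₂ : {l | C₂ (some l) = q'' ∧ ¬ canRecv P q'' m} ⊆
      {l | receiveOrStay P m (C₂ (some l)) = q''} := by
    rintro l ⟨hl, hno⟩
    simp only [Set.mem_ofPred_eq, hl, receiveOrStay_of_not_canRecv hno]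
  have hmid : {l | C₁ (some l) = q'' ∧ ¬ canRecv P q'' m}.ncard ≤
      {l | C₂ (some l) = q'' ∧ ¬ canRecv P q'' m}.ncard := by
    by_cases hcr : canRecv P q'' m <;> simp [hcr, hle.2 q'' hq'']
  exact (Set.ncard_le_ncard hsub₁ (Set.toFinite _)).trans
    (hmid.trans (Set.ncard_le_ncard hsub₂ (Set.toFinite _)))

end Simulation

/-- monotonicity of star networks for 1-phase-bounded protocols. -/
theorem star_monotonicity {Q M ι₁ ι₂ : Type} [Fintype ι₁] [Fintype ι₂]
    (P : Protocol Q M) (φ : Q → PTag) (hφ : IsPhaseAssignment 1 P φ)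
    (C₁ C'₁ : Option ι₁ → Q) (C₂ : Option ι₂ → Q)
    (hstep : StepAny (starGraph ι₁) P C₁ C'₁)
    (hle : StarLe φ C₁ C₂) :
    ∃ C'₂ : Option ι₂ → Q, StarLe φ C'₁ C'₂ ∧ Reach (starGraph ι₂) P C₂ C'₂ := by
  suffices ∃ C'₂, StarLe φ C'₁ C'₂ ∧ (StepAny (starGraph ι₂) P C₂ C'₂ ∨ C'₂ = C₂) by
    obtain ⟨C'₂, hle', hstep' | rfl⟩ := this
    exacts [⟨C'₂, hle', .single hstep'⟩, ⟨C'₂, hle', .refl⟩]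
  obtain ⟨v, ⟨q, α, q'⟩, h⟩ := hstep
  rcases v with _ | i
  · cases α with
    | tau =>
      obtain ⟨C'₂, hle', hstep'⟩ := hle.exists_step_of_none_tau h
      exact ⟨C'₂, hle', .inl hstep'⟩
    | brd m =>
      obtain ⟨C'₂, hle', hstep'⟩ := hle.exists_step_of_none_brd hφ h
      exact ⟨C'₂, hle', .inl hstep'⟩
    | rcv m => exact h.2.2.2.elim
  · by_cases hq : q ∈ Qb φ
    · obtain ⟨C'₂, hle', hstep'⟩ := hle.exists_step_of_leaf_step h hq
      exact ⟨C'₂, hle', .inl hstep'⟩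
    · cases α with
      | tau => exact ⟨C₂, hle.of_leaf_tau_notMem_Qb hφ h hq, .inr rfl⟩
      | brd m => exact absurd (hφ.brd_source_mem_Qb h.1) hq
      | rcv m => exact h.2.2.2.elim

end BN
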